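/- arXiv:2506.16250 — 8 statements merged into one kernel-verified Lean document; each statement's English description precedes it below -/
import Mathlib

section
/- Let (F, E, i, j, (X_e), (f_v)) be an incidence structure for a normal factor graph with complex-valued local functions, where each alphabet X_e carries a distinguished element 0_e. Assume every local function f_v vanishes on weight-one arguments and that there is a real number r > 0 with ∏_{v ∈ F} f_v((0_e)_{e ∈ P(v)}) = r. Set α := r^{-1} · ∏_{v ∈ F} ( Σ_{a ∈ ∏_{e ∈ P(v)} X_e} |f_v(a)| ) − 1. Then for every integer M ≥ 1, the average degree-M cover partition function satisfies |Θ_M| ≤ r^M · Σ_{k=0}^{M} α^k, where |·| denotes the complex absolute value. -/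
open scoped BigOperators

/-- Partition function of the degree-`M` graph cover of a normal factor graph
specified by permutations `σ`. -/
noncomputable def coverZ {F E : Type} [Fintype F] [Fintype E] [DecidableEq F] [DecidableEq E]
    (i j : E → F) (X : E → Type) [∀ e, Fintype (X e)]
    (f : (v : F) → ((e : {e : E // i e = v ∨ j e = v}) → X e.1) → ℂ)
    (M : ℕ) (σ : (e : E) → Equiv.Perm (Fin M)) : ℂ :=
  ∑ y : (e : E) → Fin M → X e, ∏ m : Fin M, ∏ v : F,
    f v (fun e => if i e.1 = v then y e.1 m else y e.1 ((σ e.1)⁻¹ m))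

/-- Average degree-`M` cover partition function `Θ_M`. -/
noncomputable def avgCoverZ {F E : Type} [Fintype F] [Fintype E] [DecidableEq F] [DecidableEq E]
    (i j : E → F) (X : E → Type) [∀ e, Fintype (X e)]
    (f : (v : F) → ((e : {e : E // i e = v ∨ j e = v}) → X e.1) → ℂ)
    (M : ℕ) : ℂ :=
  ((M.factorial : ℂ) ^ (Fintype.card E))⁻¹ *
    ∑ σ : (e : E) → Equiv.Perm (Fin M), coverZ i j X f M σ

/-!
Bounding every local function by its absolute value turns the sum over permutations and cover
configurations into a sum over families `b` of local configurations (one for each function node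
and copy), each weighted by the number of permutation tuples compatible with it. On an edge on
which `d` copies carry a nonzero value that number is at most `d! (M - d)!`. Because no local
configuration of weight one contributes, a copy that is nonzero at a node `v` is nonzero on at
least two edges at `v`, and the log-concavity of binomial coefficients then gives
`∏_v C(M, a_v) ≤ ∏_e C(M, d_e)`, where `a_v` is the number of copies nonzero at `v`. So the
weight of `b` is at most `(M!)^|E| / ∏_v C(M, a_v)`, and the bound factors over the nodes:
node `v` contributes `h_M(x_v, y_v) = ∑_k x_v^(M-k) y_v^k`, where `x_v` is the weight of the zero
configuration and `y_v` the total weight of the others. Finally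
`∏_v h_M(x_v, y_v) ≤ h_M(∏ x_v, ∏ (x_v + y_v) - ∏ x_v) = r^M ∑_k α^k`.
-/

open Finset Nat

theorem sub_pow_le_choose_mul_succ_pow (M n : ℕ) : (M - n) ^ n ≤ M.choose n * (n + 1) ^ n :=
  calc (M - n) ^ n ≤ (M + 1 - n) ^ n := Nat.pow_le_pow_left (by omega) n
    _ ≤ M.descFactorial n := M.pow_sub_le_descFactorial n
    _ = n ! * M.choose n := M.descFactorial_eq_factorial_mul_choose n
    _ ≤ (n + 1) ^ n * M.choose n := by
      gcongr
      exact n.factorial_le_pow.trans (Nat.pow_le_pow_left n.le_succ n)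
    _ = M.choose n * (n + 1) ^ n := mul_comm _ _

theorem choose_succ_pow_le_choose_pow (M n : ℕ) :
    M.choose (n + 1) ^ n ≤ M.choose n ^ (n + 1) := by
  refine Nat.le_of_mul_le_mul_right ?_ (by positivity : 0 < (n + 1) ^ n)
  calc M.choose (n + 1) ^ n * (n + 1) ^ n = M.choose n ^ n * (M - n) ^ n := by
        rw [← mul_pow, Nat.choose_succ_right_eq, mul_pow]
    _ ≤ M.choose n ^ n * (M.choose n * (n + 1) ^ n) := by
        gcongr; exact sub_pow_le_choose_mul_succ_pow M n
    _ = M.choose n ^ (n + 1) * (n + 1) ^ n := by ring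

theorem antitone_log_choose_succ_div (M : ℕ) :
    Antitone fun n : ℕ => Real.log (M.choose (n + 1)) / (n + 1) := by
  refine antitone_nat_of_succ_le fun n => ?_
  rw [div_le_div_iff₀ (by positivity) (by positivity)]
  rcases (M.choose (n + 2)).eq_zero_or_pos with h | h
  · simp only [h, Nat.cast_zero, Real.log_zero, zero_mul]
    exact mul_nonneg (Real.log_natCast_nonneg _) (by positivity)
  have key := Real.log_le_log (by positivity)
    (Nat.cast_le.mpr (choose_succ_pow_le_choose_pow M (n + 1)))
  push_cast [Real.log_pow] at key ⊢
  linarith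

theorem mul_log_choose_le_mul_log_choose {M d a : ℕ} (hda : d ≤ a) :
    d * Real.log (M.choose a) ≤ a * Real.log (M.choose d) := by
  obtain _ | d := d
  · simp
  obtain ⟨a, rfl⟩ : ∃ a', a = a' + 1 := ⟨a - 1, by omega⟩
  have := antitone_log_choose_succ_div M (show d ≤ a by omega)
  rw [div_le_div_iff₀ (by positivity) (by positivity)] at this
  push_cast
  linarith

theorem prod_choose_le_prod_choose {V ι : Type*} [Fintype V] [Fintype ι]
    (R : V → ι → Prop) [∀ v e, Decidable (R v e)] (M : ℕ) (a : V → ℕ) (d : ι → ℕ)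
    (hdM : ∀ e, d e ≤ M) (hR : ∀ e, #{v | R v e} ≤ 2) (hda : ∀ v e, R v e → d e ≤ a v)
    (hcover : ∀ v, 2 * a v ≤ ∑ e with R v e, d e) :
    ∏ v, M.choose (a v) ≤ ∏ e, M.choose (d e) := by
  by_cases haM : ∀ v, a v ≤ M
  swap
  · obtain ⟨v, hv⟩ := not_forall.mp haM
    rw [prod_eq_zero (mem_univ v) (choose_eq_zero_of_lt (not_le.mp hv))]
    exact Nat.zero_le _
  set L : ℕ → ℝ := fun n => Real.log (M.choose n)
  have hL : ∀ n, 0 ≤ L n := fun n => Real.log_natCast_nonneg _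
  -- `w v` is the share of `L (a v)` charged to each of the `2 * a v` edge incidences at `v`.
  set w : V → ℝ := fun v => L (a v) / a v
  have hw : ∀ v, 0 ≤ w v := fun v => div_nonneg (hL _) (Nat.cast_nonneg _)
  have hvertex : ∀ v, L (a v) = a v * w v := by
    intro v
    rcases eq_or_ne (a v) 0 with h | h
    · simp [w, L, h]
    · change L (a v) = a v * (L (a v) / a v)
      field_simp
  have hedge : ∀ v e, R v e → d e * w v ≤ L (d e) := by
    intro v e hve
    rcases eq_or_ne (a v) 0 with h | h
    · simpa [w, h] using hL (d e)
    · rw [← mul_div_assoc, div_le_iff₀ (by positivity), mul_comm (L _)]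
      exact mul_log_choose_le_mul_log_choose (hda v e hve)
  have hsum : ∑ v, L (a v) ≤ ∑ e, L (d e) :=
    calc ∑ v, L (a v) = ∑ v, a v * w v := sum_congr rfl fun v _ => hvertex v
      _ ≤ ∑ v, (∑ e with R v e, (d e : ℝ)) / 2 * w v := by
        gcongr with v
        rw [le_div_iff₀ two_pos, mul_comm]
        exact_mod_cast hcover v
      _ = (∑ v, ∑ e with R v e, d e * w v) / 2 := by
        simp only [sum_div, sum_mul, div_mul_eq_mul_div]
      _ ≤ (∑ v, ∑ e with R v e, L (d e)) / 2 := by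
        gcongr with v _ e he
        exact hedge v e (mem_filter.mp he).2
      _ = (∑ e, #{v | R v e} * L (d e)) / 2 := by
        simp only [sum_filter, card_filter, Nat.cast_sum, sum_mul]
        rw [sum_comm]
        simp
      _ ≤ ∑ e, L (d e) := by
        rw [div_le_iff₀ two_pos, sum_mul]
        refine sum_le_sum fun e _ => ?_
        have h2 : (#{v | R v e} : ℝ) ≤ 2 := by exact_mod_cast hR e
        exact (mul_le_mul_of_nonneg_right h2 (hL _)).trans_eq (mul_comm _ _)
  have hpos : ∀ n ≤ M, (0 : ℝ) < M.choose n := fun n hn => Nat.cast_pos.mpr (choose_pos hn)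
  rw [← Nat.cast_le (α := ℝ), Nat.cast_prod, Nat.cast_prod,
    ← Real.log_le_log_iff (prod_pos fun v _ => hpos _ (haM v))
      (prod_pos fun e _ => hpos _ (hdM e)),
    Real.log_prod fun v _ => (hpos _ (haM v)).ne', Real.log_prod fun e _ => (hpos _ (hdM e)).ne']
  exact hsum

theorem card_perm_forall_iff_le {α : Type*} [Fintype α] [DecidableEq α] (p q : α → Prop)
    [DecidablePred p] [DecidablePred q] :
    #{π : Equiv.Perm α | ∀ m, p m ↔ q (π m)} ≤
      (#{m | p m})! * (Fintype.card α - #{m | p m})! := by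
  rcases eq_empty_or_nonempty {π : Equiv.Perm α | ∀ m, p m ↔ q (π m)} with h | ⟨π₀, hπ₀⟩
  · simp [h]
  replace hπ₀ := (mem_filter.mp hπ₀).2
  let restrict (π : {π : Equiv.Perm α // ∀ m, p m ↔ q (π m)}) :
      ({m // p m} ≃ {m // q m}) × ({m // ¬p m} ≃ {m // ¬q m}) :=
    (π.1.subtypeEquiv π.2, π.1.subtypeEquiv fun m => not_congr (π.2 m))
  have hrestrict : Function.Injective restrict := by
    rintro ⟨π, hπ⟩ ⟨π', hπ'⟩ h
    simp only [restrict, Prod.mk.injEq] at h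
    ext m
    by_cases hm : p m
    · exact congrArg (fun e : {m // p m} ≃ {m // q m} => ((e ⟨m, hm⟩ : {m // q m}) : α)) h.1
    · exact congrArg (fun e : {m // ¬p m} ≃ {m // ¬q m} => ((e ⟨m, hm⟩ : {m // ¬q m}) : α)) h.2
  calc #{π : Equiv.Perm α | ∀ m, p m ↔ q (π m)}
      = Fintype.card {π : Equiv.Perm α // ∀ m, p m ↔ q (π m)} := (Fintype.card_subtype _).symm
    _ ≤ _ := Fintype.card_le_of_injective restrict hrestrict
    _ = _ := by
      rw [Fintype.card_prod, Fintype.card_equiv (π₀.subtypeEquiv hπ₀),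
        Fintype.card_equiv (π₀.subtypeEquiv fun m => not_congr (hπ₀ m)),
        Fintype.card_subtype_compl, Fintype.card_subtype]

theorem two_mul_card_ne_le_sum_card {ι κ : Type*} [Fintype ι] [Fintype κ] {A : κ → Type*}
    [∀ k, DecidableEq (A k)] (z : ∀ k, A k) (s : ι → ∀ k, A k)
    (hs : ∀ m, #{k | s m k ≠ z k} ≠ 1) :
    2 * #{m | s m ≠ z} ≤ ∑ k, #{m | s m k ≠ z k} := by
  have hweight : ∀ m ∈ ({m | s m ≠ z} : Finset ι), 2 ≤ #{k | s m k ≠ z k} := by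
    intro m hm
    obtain ⟨k, hk⟩ := Function.ne_iff.mp (mem_filter.mp hm).2
    have : 0 < #{k | s m k ≠ z k} := card_pos.mpr ⟨k, mem_filter.mpr ⟨mem_univ k, hk⟩⟩
    have := hs m
    omega
  calc 2 * #{m | s m ≠ z} = ∑ m with s m ≠ z, 2 := by rw [sum_const, smul_eq_mul, mul_comm]
    _ ≤ ∑ m with s m ≠ z, #{k | s m k ≠ z k} := sum_le_sum hweight
    _ ≤ ∑ m, #{k | s m k ≠ z k} := sum_le_sum_of_subset (filter_subset _ _)
    _ = ∑ k, #{m | s m k ≠ z k} := by simp only [card_filter]; exact sum_comm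

theorem sum_prod_div_choose_card_ne {ι C : Type*} [Fintype ι] [DecidableEq ι] [Fintype C]
    [DecidableEq C] (c₀ : C) (g : C → ℝ) :
    ∑ s : ι → C, (∏ m, g (s m)) / (Fintype.card ι).choose #{m | s m ≠ c₀} =
      ∑ k ∈ range (Fintype.card ι + 1),
        g c₀ ^ (Fintype.card ι - k) * (∑ c, g c - g c₀) ^ k := by
  set n := Fintype.card ι
  have hfibre (T : Finset ι) :
      ∑ s : ι → C with ({m | s m ≠ c₀} : Finset ι) = T, ∏ m, g (s m) =
        g c₀ ^ (n - #T) * (∑ c, g c - g c₀) ^ #T := by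
    have : ({s : ι → C | ({m | s m ≠ c₀} : Finset ι) = T} : Finset _) =
        Fintype.piFinset fun m => if m ∈ T then univ.erase c₀ else {c₀} := by
      ext s
      simp only [mem_filter, mem_univ, true_and, Fintype.mem_piFinset, Finset.ext_iff]
      refine forall_congr' fun m => ?_
      split_ifs with hm <;> simp [hm]
    rw [this, ← prod_univ_sum]
    simp only [apply_ite (fun t : Finset C => ∑ c ∈ t, g c), sum_erase_eq_sub (mem_univ c₀),
      sum_singleton, prod_ite, prod_const, filter_mem_eq_inter, univ_inter]
    rw [mul_comm, ← card_compl, compl_eq_univ_sdiff, ← filter_notMem_eq_sdiff]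
  calc ∑ s : ι → C, (∏ m, g (s m)) / n.choose #{m | s m ≠ c₀}
      = ∑ T : Finset ι, ∑ s : ι → C with ({m | s m ≠ c₀} : Finset ι) = T,
          (∏ m, g (s m)) / n.choose #T := by
        rw [← sum_fiberwise univ (fun s : ι → C => ({m | s m ≠ c₀} : Finset ι))]
        refine sum_congr rfl fun T _ => sum_congr rfl fun s hs => ?_
        rw [(mem_filter.mp hs).2]
    _ = ∑ T : Finset ι, g c₀ ^ (n - #T) * (∑ c, g c - g c₀) ^ #T / n.choose #T := by
        simp only [← sum_div, hfibre]
    _ = _ := by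
        rw [← powerset_univ, sum_powerset_apply_card
          (fun k => g c₀ ^ (n - k) * (∑ c, g c - g c₀) ^ k / n.choose k), Finset.card_univ]
        refine sum_congr rfl fun k hk => ?_
        rw [nsmul_eq_mul, mul_div_cancel₀]
        exact Nat.cast_ne_zero.mpr (choose_pos (Nat.lt_succ_iff.mp (mem_range.mp hk))).ne'

/-- The complete homogeneous symmetric polynomial of degree `M` in two variables. -/
def hsymm₂ (M : ℕ) (x y : ℝ) : ℝ := ∑ k ∈ range (M + 1), x ^ (M - k) * y ^ k

section hsymm₂

variable {M : ℕ} {x y : ℝ}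

theorem hsymm₂_zero : hsymm₂ 0 x y = 1 := by simp [hsymm₂]

theorem hsymm₂_succ : hsymm₂ (M + 1) x y = x ^ (M + 1) + y * hsymm₂ M x y := by
  rw [hsymm₂, sum_range_succ', hsymm₂, mul_sum, add_comm]
  congr 1
  · simp
  · refine sum_congr rfl fun k _ => ?_
    rw [Nat.add_sub_add_right, pow_succ]
    ring

theorem hsymm₂_nonneg (hx : 0 ≤ x) (hy : 0 ≤ y) : 0 ≤ hsymm₂ M x y := by
  unfold hsymm₂; positivity

theorem pow_le_hsymm₂ (hx : 0 ≤ x) (hy : 0 ≤ y) : x ^ M ≤ hsymm₂ M x y := by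
  have := single_le_sum (f := fun k => x ^ (M - k) * y ^ k) (fun k _ => by positivity)
    (mem_range.mpr M.succ_pos)
  simpa [hsymm₂] using this

theorem hsymm₂_mul_self_mul (x a : ℝ) :
    hsymm₂ M x (x * a) = x ^ M * ∑ k ∈ range (M + 1), a ^ k := by
  rw [hsymm₂, mul_sum]
  refine sum_congr rfl fun k hk => ?_
  rw [mul_pow, ← mul_assoc, ← pow_add, Nat.sub_add_cancel (Nat.lt_succ_iff.mp (mem_range.mp hk))]

theorem hsymm₂_mul_hsymm₂_le {x₁ y₁ x₂ y₂ : ℝ} (hx₁ : 0 ≤ x₁) (hy₁ : 0 ≤ y₁) (hx₂ : 0 ≤ x₂)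
    (hy₂ : 0 ≤ y₂) :
    hsymm₂ M x₁ y₁ * hsymm₂ M x₂ y₂ ≤ hsymm₂ M (x₁ * x₂) (x₁ * y₂ + y₁ * x₂ + y₁ * y₂) := by
  induction M with
  | zero => simp [hsymm₂_zero]
  | succ M ih =>
    set u := hsymm₂ M x₁ y₁
    set w := hsymm₂ M x₂ y₂
    have hu : x₁ ^ M ≤ u := pow_le_hsymm₂ hx₁ hy₁
    have hw : x₂ ^ M ≤ w := pow_le_hsymm₂ hx₂ hy₂
    have hu₀ : 0 ≤ u := hsymm₂_nonneg hx₁ hy₁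
    have hw₀ : 0 ≤ w := hsymm₂_nonneg hx₂ hy₂
    have h₁ : x₁ ^ (M + 1) * (y₂ * w) ≤ x₁ * y₂ * u * w := by
      rw [pow_succ]
      have := mul_le_mul_of_nonneg_right hu (by positivity : 0 ≤ x₁ * (y₂ * w))
      linarith
    have h₂ : y₁ * u * x₂ ^ (M + 1) ≤ y₁ * x₂ * u * w := by
      rw [pow_succ]
      have := mul_le_mul_of_nonneg_right hw (by positivity : 0 ≤ y₁ * u * x₂)
      linarith
    rw [hsymm₂_succ, hsymm₂_succ, hsymm₂_succ]
    calc (x₁ ^ (M + 1) + y₁ * u) * (x₂ ^ (M + 1) + y₂ * w)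
        ≤ (x₁ * x₂) ^ (M + 1) + (x₁ * y₂ + y₁ * x₂ + y₁ * y₂) * (u * w) := by
          linear_combination h₁ + h₂
      _ ≤ _ := by gcongr

theorem prod_hsymm₂_le {V : Type*} (s : Finset V) (x y : V → ℝ) (hx : ∀ v, 0 ≤ x v)
    (hy : ∀ v, 0 ≤ y v) :
    ∏ v ∈ s, hsymm₂ M (x v) (y v) ≤
      hsymm₂ M (∏ v ∈ s, x v) (∏ v ∈ s, (x v + y v) - ∏ v ∈ s, x v) := by
  classical
  induction s using Finset.induction_on with
  | empty => simp [hsymm₂]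
  | insert a s ha ih =>
    have hX : 0 ≤ ∏ v ∈ s, x v := prod_nonneg fun v _ => hx v
    have hY : 0 ≤ ∏ v ∈ s, (x v + y v) - ∏ v ∈ s, x v :=
      sub_nonneg.mpr (prod_le_prod (fun v _ => hx v) fun v _ => le_add_of_nonneg_right (hy v))
    rw [prod_insert ha, prod_insert ha, prod_insert ha]
    calc hsymm₂ M (x a) (y a) * ∏ v ∈ s, hsymm₂ M (x v) (y v)
        ≤ hsymm₂ M (x a) (y a) * hsymm₂ M (∏ v ∈ s, x v)
            (∏ v ∈ s, (x v + y v) - ∏ v ∈ s, x v) := by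
          gcongr
          exact hsymm₂_nonneg (hx a) (hy a)
      _ ≤ _ := hsymm₂_mul_hsymm₂_le (hx a) (hy a) hX hY
      _ = _ := by ring_nf

end hsymm₂

section Cover

variable {F E : Type} (i j : E → F) {X : E → Type} {M : ℕ}

abbrev LocalConf (X : E → Type) (v : F) : Type := (e : {e : E // i e = v ∨ j e = v}) → X e.1

def coverConf [DecidableEq F] (σ : (e : E) → Equiv.Perm (Fin M)) (y : (e : E) → Fin M → X e)
    (v : F) (m : Fin M) : LocalConf i j X v :=
  fun e => if i e.1 = v then y e.1 m else y e.1 ((σ e.1)⁻¹ m)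

def zeroConf (x0 : (e : E) → X e) (v : F) : LocalConf i j X v := fun e => x0 e.1

def EdgeCompatible (e : E) (π : Equiv.Perm (Fin M))
    (b : (v : F) → Fin M → LocalConf i j X v) : Prop :=
  ∀ m, b (j e) m ⟨e, .inr rfl⟩ = b (i e) (π⁻¹ m) ⟨e, .inl rfl⟩

instance [∀ e, DecidableEq (X e)] (e : E) (π : Equiv.Perm (Fin M))
    (b : (v : F) → Fin M → LocalConf i j X v) : Decidable (EdgeCompatible i j e π b) :=
  inferInstanceAs (Decidable (∀ _, _))

theorem sum_coverConf [Fintype F] [Fintype E] [DecidableEq F] [DecidableEq E]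
    [∀ e, Fintype (X e)] [∀ e, DecidableEq (X e)] {β : Type*} [AddCommMonoid β]
    (hij : ∀ e, i e ≠ j e) (σ : (e : E) → Equiv.Perm (Fin M))
    (T : ((v : F) → Fin M → LocalConf i j X v) → β) :
    ∑ y, T (coverConf i j σ y) = ∑ b with ∀ e, EdgeCompatible i j e (σ e) b, T b := by
  refine sum_nbij' (coverConf i j σ) (fun b e m => b (i e) m ⟨e, .inl rfl⟩) ?_ ?_ ?_ ?_ ?_
  · intro y _
    simp only [mem_filter, mem_univ, true_and]
    intro e m
    simp [coverConf, hij e]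
  · simp
  · intro y _
    ext e m
    simp [coverConf]
  · intro b hb
    simp only [mem_filter, mem_univ, true_and] at hb
    ext v m ⟨e, he⟩
    by_cases hie : i e = v
    · subst hie
      simp [coverConf]
    · obtain rfl : j e = v := he.resolve_left hie
      simp [coverConf, hie, hb e m]
  · simp

theorem card_edgeCompatible_le [∀ e, DecidableEq (X e)] (x0 : (e : E) → X e)
    (b : (v : F) → Fin M → LocalConf i j X v) (e : E) :
    #{π | EdgeCompatible i j e π b} ≤
      (#{m | b (i e) m ⟨e, .inl rfl⟩ ≠ x0 e})! *
        (M - #{m | b (i e) m ⟨e, .inl rfl⟩ ≠ x0 e})! := by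
  refine (card_le_card fun π hπ => ?_).trans
    ((card_perm_forall_iff_le _ fun m => b (j e) m ⟨e, .inr rfl⟩ ≠ x0 e).trans_eq
      (by rw [Fintype.card_fin]))
  simp only [mem_filter, mem_univ, true_and] at hπ ⊢
  intro m
  simp [hπ (π m)]

theorem card_ne_eq_of_edgeCompatible [∀ e, DecidableEq (X e)] (x0 : (e : E) → X e)
    {b : (v : F) → Fin M → LocalConf i j X v} {e : E} {π : Equiv.Perm (Fin M)}
    (h : EdgeCompatible i j e π b) :
    #{m | b (j e) m ⟨e, .inr rfl⟩ ≠ x0 e} = #{m | b (i e) m ⟨e, .inl rfl⟩ ≠ x0 e} := by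
  refine card_equiv π.symm fun m => ?_
  simp [h m]

theorem card_compatible_eq_prod [Fintype E] [DecidableEq E] [∀ e, DecidableEq (X e)]
    (b : (v : F) → Fin M → LocalConf i j X v) :
    #{σ : (e : E) → Equiv.Perm (Fin M) | ∀ e, EdgeCompatible i j e (σ e) b} =
      ∏ e, #{π | EdgeCompatible i j e π b} := by
  rw [← Fintype.card_piFinset]
  congr 1
  ext σ
  simp [Fintype.mem_piFinset]

theorem card_compatible_mul_prod_choose_le [Fintype F] [Fintype E] [DecidableEq F]
    [DecidableEq E] [∀ e, DecidableEq (X e)] (x0 : (e : E) → X e)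
    (b : (v : F) → Fin M → LocalConf i j X v) (hb : ∀ v m, #{e | b v m e ≠ x0 e.1} ≠ 1) :
    #{σ : (e : E) → Equiv.Perm (Fin M) | ∀ e, EdgeCompatible i j e (σ e) b} *
        ∏ v, M.choose #{m | b v m ≠ zeroConf i j x0 v} ≤ M ! ^ Fintype.card E := by
  rcases Nat.eq_zero_or_pos #{σ : (e : E) → Equiv.Perm (Fin M) |
      ∀ e, EdgeCompatible i j e (σ e) b} with h | h
  · rw [h, zero_mul]
    exact Nat.zero_le _
  obtain ⟨σ, hσ⟩ := card_pos.mp h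
  set d : E → ℕ := fun e => #{m | b (i e) m ⟨e, .inl rfl⟩ ≠ x0 e}
  have hd : ∀ v e (h : i e = v ∨ j e = v), #{m | b v m ⟨e, h⟩ ≠ x0 e} = d e := by
    rintro v e (rfl | rfl)
    · rfl
    · exact card_ne_eq_of_edgeCompatible i j x0 ((mem_filter.mp hσ).2 e)
  have hdM : ∀ e, d e ≤ M := fun e => (card_filter_le _ _).trans_eq (by simp)
  have hstar : ∏ v, M.choose #{m | b v m ≠ zeroConf i j x0 v} ≤ ∏ e, M.choose (d e) := by
    refine prod_choose_le_prod_choose (fun v e => i e = v ∨ j e = v) M _ d hdM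
      (fun e => (card_le_card (t := {i e, j e}) ?_).trans card_le_two) (fun v e h => ?_)
      (fun v => ?_)
    · intro v
      simp only [mem_filter, mem_univ, true_and, mem_insert, mem_singleton]
      exact fun h => h.imp Eq.symm Eq.symm
    · rw [← hd v e h]
      exact card_le_card (monotone_filter_right _ fun m _ hm heq => hm (by rw [heq]; rfl))
    · refine (two_mul_card_ne_le_sum_card (zeroConf i j x0 v) (b v) (hb v)).trans_eq ?_
      rw [sum_subtype (p := fun e => i e = v ∨ j e = v) _ (fun e => by simp) d]
      exact sum_congr rfl fun e _ => hd v e.1 e.2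
  calc #{σ : (e : E) → Equiv.Perm (Fin M) | ∀ e, EdgeCompatible i j e (σ e) b} *
        ∏ v, M.choose #{m | b v m ≠ zeroConf i j x0 v}
      ≤ (∏ e, (d e)! * (M - d e)!) * ∏ e, M.choose (d e) := by
        rw [card_compatible_eq_prod]
        exact Nat.mul_le_mul (prod_le_prod' fun e _ => card_edgeCompatible_le i j x0 b e) hstar
    _ = ∏ _e : E, M ! := by
        rw [← prod_mul_distrib]
        refine prod_congr rfl fun e _ => ?_
        rw [mul_comm, ← mul_assoc, Nat.choose_mul_factorial_mul_factorial (hdM e)]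
    _ = M ! ^ Fintype.card E := by rw [prod_const, Finset.card_univ]

theorem card_compatible_mul_weight_le [Fintype F] [Fintype E] [DecidableEq F] [DecidableEq E]
    [∀ e, DecidableEq (X e)] (x0 : (e : E) → X e) (g : (v : F) → LocalConf i j X v → ℝ)
    (hg : ∀ v c, 0 ≤ g v c) (hg1 : ∀ v c, #{e | c e ≠ x0 e.1} = 1 → g v c = 0)
    (b : (v : F) → Fin M → LocalConf i j X v) :
    (#{σ : (e : E) → Equiv.Perm (Fin M) | ∀ e, EdgeCompatible i j e (σ e) b} : ℝ) *
        ∏ v, ∏ m, g v (b v m) ≤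
      M ! ^ Fintype.card E *
        ∏ v, (∏ m, g v (b v m)) / M.choose #{m | b v m ≠ zeroConf i j x0 v} := by
  rw [prod_div_distrib]
  by_cases hW : ∏ v, ∏ m, g v (b v m) = 0
  · simp [hW]
  have hb : ∀ v m, #{e | b v m e ≠ x0 e.1} ≠ 1 := fun v m h =>
    hW (prod_eq_zero (mem_univ v) (prod_eq_zero (mem_univ m) (hg1 v _ h)))
  have hC : (0 : ℝ) < ∏ v, (M.choose #{m | b v m ≠ zeroConf i j x0 v} : ℝ) :=
    prod_pos fun v _ => Nat.cast_pos.mpr (choose_pos ((card_filter_le _ _).trans_eq (by simp)))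
  rw [mul_div_assoc', le_div_iff₀ hC, mul_right_comm]
  refine mul_le_mul_of_nonneg_right ?_ (prod_nonneg fun v _ => prod_nonneg fun m _ => hg v _)
  exact_mod_cast card_compatible_mul_prod_choose_le i j x0 b hb

theorem sum_sum_prod_coverConf_le [Fintype F] [Fintype E] [DecidableEq F] [DecidableEq E]
    [∀ e, Fintype (X e)] [∀ e, DecidableEq (X e)] (hij : ∀ e, i e ≠ j e) (x0 : (e : E) → X e)
    (g : (v : F) → LocalConf i j X v → ℝ) (hg : ∀ v c, 0 ≤ g v c)
    (hg1 : ∀ v c, #{e | c e ≠ x0 e.1} = 1 → g v c = 0) :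
    ∑ σ : (e : E) → Equiv.Perm (Fin M), ∑ y, ∏ m, ∏ v, g v (coverConf i j σ y v m) ≤
      M ! ^ Fintype.card E *
        ∏ v, hsymm₂ M (g v (zeroConf i j x0 v)) (∑ c, g v c - g v (zeroConf i j x0 v)) := by
  calc ∑ σ : (e : E) → Equiv.Perm (Fin M), ∑ y, ∏ m, ∏ v, g v (coverConf i j σ y v m)
      = ∑ σ : (e : E) → Equiv.Perm (Fin M), ∑ b with ∀ e, EdgeCompatible i j e (σ e) b,
          ∏ v, ∏ m, g v (b v m) := by
        refine sum_congr rfl fun σ _ => ?_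
        rw [← sum_coverConf i j hij σ]
        exact sum_congr rfl fun y _ => prod_comm
    _ = ∑ b, (#{σ : (e : E) → Equiv.Perm (Fin M) | ∀ e, EdgeCompatible i j e (σ e) b} : ℝ) *
          ∏ v, ∏ m, g v (b v m) := by
        simp only [sum_filter]
        rw [sum_comm]
        refine sum_congr rfl fun b _ => ?_
        rw [← sum_filter, sum_const, nsmul_eq_mul]
    _ ≤ ∑ b, M ! ^ Fintype.card E *
          ∏ v, (∏ m, g v (b v m)) / M.choose #{m | b v m ≠ zeroConf i j x0 v} :=
        sum_le_sum fun b _ => card_compatible_mul_weight_le i j x0 g hg hg1 b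
    _ = M ! ^ Fintype.card E * ∏ v, ∑ s : Fin M → LocalConf i j X v,
          (∏ m, g v (s m)) / M.choose #{m | s m ≠ zeroConf i j x0 v} := by
        rw [Fintype.prod_sum, mul_sum]
    _ = _ := by
        refine congrArg _ (prod_congr rfl fun v _ => ?_)
        have := sum_prod_div_choose_card_ne (ι := Fin M) (zeroConf i j x0 v) (g v)
        rw [Fintype.card_fin] at this
        exact this

theorem norm_avgCoverZ_le [Fintype F] [Fintype E] [DecidableEq F] [DecidableEq E]
    [∀ e, Fintype (X e)] (f : (v : F) → LocalConf i j X v → ℂ) :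
    ‖avgCoverZ i j X f M‖ ≤ ((M ! : ℝ) ^ Fintype.card E)⁻¹ *
      ∑ σ : (e : E) → Equiv.Perm (Fin M), ∑ y, ∏ m, ∏ v, ‖f v (coverConf i j σ y v m)‖ := by
  rw [avgCoverZ, norm_mul, norm_inv, norm_pow, Complex.norm_natCast]
  gcongr
  refine (norm_sum_le _ _).trans (sum_le_sum fun σ _ => (norm_sum_le _ _).trans_eq ?_)
  simp only [norm_prod]
  rfl

end Cover

theorem stmt2_general {F E : Type} [Fintype F] [Fintype E] [DecidableEq F] [DecidableEq E]
    (i j : E → F) (hij : ∀ e, i e ≠ j e)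
    (X : E → Type) [∀ e, Fintype (X e)] [∀ e, DecidableEq (X e)]
    (x0 : (e : E) → X e)
    (f : (v : F) → ((e : {e : E // i e = v ∨ j e = v}) → X e.1) → ℂ)
    (hvanish : ∀ (v : F) (a : (e : {e : E // i e = v ∨ j e = v}) → X e.1),
      (Finset.univ.filter (fun e : {e : E // i e = v ∨ j e = v} => a e ≠ x0 e.1)).card = 1 →
      f v a = 0)
    (r : ℝ) (hr : 0 < r)
    (hprod : (∏ v : F, f v (fun e => x0 e.1)) = (r : ℂ))
    (α : ℝ)
    (hα : α = r⁻¹ *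
      (∏ v : F, ∑ a : (e : {e : E // i e = v ∨ j e = v}) → X e.1, ‖f v a‖) - 1)
    (M : ℕ) :
    ‖avgCoverZ i j X f M‖ ≤ r ^ M * ∑ k ∈ Finset.range (M + 1), α ^ k := by
  set g : (v : F) → LocalConf i j X v → ℝ := fun v c => ‖f v c‖
  have hr₀ : ∏ v, g v (zeroConf i j x0 v) = r := by
    change ∏ v, ‖f v fun e => x0 e.1‖ = r
    simpa [norm_prod, abs_of_pos hr] using congrArg norm hprod
  have hrα : ∏ v, (g v (zeroConf i j x0 v) + (∑ c, g v c - g v (zeroConf i j x0 v))) -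
      ∏ v, g v (zeroConf i j x0 v) = r * α := by
    simp only [add_sub_cancel, hr₀, hα, g]
    field_simp
  calc ‖avgCoverZ i j X f M‖
      ≤ ((M ! : ℝ) ^ Fintype.card E)⁻¹ *
          ∑ σ : (e : E) → Equiv.Perm (Fin M), ∑ y, ∏ m, ∏ v, g v (coverConf i j σ y v m) :=
        norm_avgCoverZ_le i j f
    _ ≤ ((M ! : ℝ) ^ Fintype.card E)⁻¹ * (M ! ^ Fintype.card E *
          ∏ v, hsymm₂ M (g v (zeroConf i j x0 v)) (∑ c, g v c - g v (zeroConf i j x0 v))) := by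
        gcongr
        exact sum_sum_prod_coverConf_le i j hij x0 g (fun v c => norm_nonneg _)
          fun v c h => by simp [g, hvanish v c h]
    _ = ∏ v, hsymm₂ M (g v (zeroConf i j x0 v)) (∑ c, g v c - g v (zeroConf i j x0 v)) :=
        inv_mul_cancel_left₀ (by positivity) _
    _ ≤ _ := prod_hsymm₂_le _ _ _ (fun v => norm_nonneg _)
          fun v => sub_nonneg.mpr (single_le_sum (fun c _ => norm_nonneg _) (mem_univ _))
    _ = r ^ M * ∑ k ∈ Finset.range (M + 1), α ^ k := by rw [hrα, hr₀, hsymm₂_mul_self_mul]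

theorem stmt2 {F E : Type} [Fintype F] [Fintype E] [DecidableEq F] [DecidableEq E]
    (i j : E → F) (hij : ∀ e, i e ≠ j e)
    (X : E → Type) [∀ e, Fintype (X e)] [∀ e, DecidableEq (X e)]
    (x0 : (e : E) → X e)
    (f : (v : F) → ((e : {e : E // i e = v ∨ j e = v}) → X e.1) → ℂ)
    (hvanish : ∀ (v : F) (a : (e : {e : E // i e = v ∨ j e = v}) → X e.1),
      (Finset.univ.filter (fun e : {e : E // i e = v ∨ j e = v} => a e ≠ x0 e.1)).card = 1 →
      f v a = 0)
    (r : ℝ) (hr : 0 < r)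
    (hprod : (∏ v : F, f v (fun e => x0 e.1)) = (r : ℂ))
    (α : ℝ)
    (hα : α = r⁻¹ *
      (∏ v : F, ∑ a : (e : {e : E // i e = v ∨ j e = v}) → X e.1, ‖f v a‖) - 1)
    (M : ℕ) (hM : 1 ≤ M) :
    ‖avgCoverZ i j X f M‖ ≤ r ^ M * ∑ k ∈ Finset.range (M + 1), α ^ k :=
  stmt2_general i j hij X x0 f hvanish r hr hprod α hα M
end

section
/- Let (F, E, i, j, (X_e), (f_v)) be an incidence structure for a normal factor graph with complex-valued local functions and let M ≥ 1 be an integer. Then the average degree-M cover partition function satisfies Θ_M = Σ_{(u,w)} ( ∏_{m=1}^{M} ∏_{v ∈ F} f_v((b_{e,m,v})_{e ∈ P(v)}) ) · ∏_{e ∈ E} P_e(u_e, w_e), where the sum is over all pairs (u, w) of families u = (u_e)_{e ∈ E} and w = (w_e)_{e ∈ E} with u_e, w_e ∈ X_e^M; where b_{e,m,v} := u_{e,m} if i(e) = v and b_{e,m,v} := w_{e,m} if j(e) = v; and where P_e(u_e, w_e) := mult(u_e)^{-1} if u_e and w_e have the same type and P_e(u_e, w_e) := 0 otherwise. -/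
open scoped BigOperators

/-- Number of occurrences of `x` in the vector `v`. -/
def occCount {X : Type} [DecidableEq X] {M : ℕ} (v : Fin M → X) (x : X) : ℕ :=
  (Finset.univ.filter (fun m => v m = x)).card

/-- Multinomial coefficient of a vector: `M! / ∏_x (c_v(x)!)`. -/
def multinom {X : Type} [Fintype X] [DecidableEq X] {M : ℕ} (v : Fin M → X) : ℕ :=
  M.factorial / ∏ x : X, (occCount v x).factorial

/-!
Expanding `Θ_M` and swapping the sums, each pair `(σ, y)` contributes the local weight of the
configuration `(u, w) = (y, y relabelled by σ)`. For fixed `u` and `w` the permutations `π` of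
`Fin M` with `u_e ∘ π = w_e` are exactly the products of bijections between corresponding fibres
of `w_e` and `u_e`, so there are `∏ₓ c(x)!` of them if `u_e` and `w_e` have the same type and
none otherwise; dividing by `M!` leaves `mult(u_e)⁻¹`.
-/

open Finset

section Types

variable {X : Type} [Fintype X] [DecidableEq X] {M : ℕ}

lemma sum_occCount (v : Fin M → X) : ∑ x, occCount v x = M := by
  simpa [occCount] using (card_eq_sum_card_fiberwise (f := v) (s := univ) (t := univ)
    fun _ _ => mem_univ _).symm

lemma prod_factorial_occCount_mul_multinom (v : Fin M → X) :
    (∏ x, (occCount v x).factorial) * multinom v = M.factorial := by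
  simpa [multinom, Nat.multinomial, sum_occCount] using Nat.multinomial_spec univ (occCount v)

lemma multinom_pos (v : Fin M → X) : 0 < multinom v := by
  simpa [multinom, Nat.multinomial, sum_occCount] using Nat.multinomial_pos univ (occCount v)

omit [Fintype X] in
def permsCompEquivFiberEquivs (a b : Fin M → X) :
    {π : Equiv.Perm (Fin M) // ∀ k, a (π k) = b k} ≃
      ∀ x : X, ({k // b k = x} ≃ {k // a k = x}) where
  toFun π x := π.1.subtypeEquiv fun k => by rw [π.2 k]
  invFun e := ⟨Equiv.ofFiberEquiv e, Equiv.ofFiberEquiv_map e⟩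
  left_inv _ := rfl
  right_inv e := by
    funext x; ext ⟨k, rfl⟩; rfl

lemma card_perms_comp_eq (a b : Fin M → X) :
    Fintype.card {π : Equiv.Perm (Fin M) // ∀ k, a (π k) = b k} =
      if ∀ x, occCount a x = occCount b x then ∏ x, (occCount a x).factorial else 0 := by
  have card_fiber (v : Fin M → X) (x : X) : Fintype.card {k // v k = x} = occCount v x :=
    Fintype.card_subtype _
  rw [Fintype.card_congr (permsCompEquivFiberEquivs a b), Fintype.card_pi]
  split_ifs with h
  · refine prod_congr rfl fun x _ => ?_
    obtain ⟨e⟩ := Fintype.card_eq.mp (by rw [card_fiber, card_fiber, h x] :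
      Fintype.card {k // b k = x} = Fintype.card {k // a k = x})
    rw [Fintype.card_equiv e, card_fiber, h]
  · push Not at h
    obtain ⟨x, hx⟩ := h
    refine prod_eq_zero (mem_univ x) (Fintype.card_eq_zero_iff.mpr ⟨fun e => hx ?_⟩)
    rw [← card_fiber, ← card_fiber, Fintype.card_congr e]

lemma inv_factorial_mul_card_perms_comp_eq (a b : Fin M → X) :
    (M.factorial : ℂ)⁻¹ * Fintype.card {π : Equiv.Perm (Fin M) // ∀ k, a (π k) = b k} =
      if ∀ x, occCount a x = occCount b x then ((multinom a : ℕ) : ℂ)⁻¹ else 0 := by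
  rw [card_perms_comp_eq]
  split_ifs
  · have hM : ((∏ x, (occCount a x).factorial : ℕ) : ℂ) * multinom a = M.factorial := by
      exact_mod_cast prod_factorial_occCount_mul_multinom a
    have hprod : ((∏ x, (occCount a x).factorial : ℕ) : ℂ) ≠ 0 :=
      left_ne_zero_of_mul (by rw [hM]; exact_mod_cast M.factorial_ne_zero)
    rw [← hM, mul_inv, mul_right_comm, inv_mul_cancel₀ hprod, one_mul]
  · simp

end Types

section Cover

variable {E : Type} {X : E → Type} {M : ℕ}

/-- The values seen at the `j`-ends of the edges of the cover `σ`: the paper's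
`a_{e,m,j(e)} = y_{e,σ_e⁻¹(m)}`. -/
def relabel (σ : (e : E) → Equiv.Perm (Fin M)) (y : (e : E) → Fin M → X e) :
    (e : E) → Fin M → X e :=
  fun e m => y e ((σ e)⁻¹ m)

def relabelFiberEquiv (y w : (e : E) → Fin M → X e) :
    {σ : (e : E) → Equiv.Perm (Fin M) // relabel σ y = w} ≃
      ∀ e, {π : Equiv.Perm (Fin M) // ∀ k, y e (π k) = w e k} :=
  calc {σ : (e : E) → Equiv.Perm (Fin M) // relabel σ y = w}
      ≃ {σ : (e : E) → Equiv.Perm (Fin M) // ∀ e, ∀ m, y e ((σ e)⁻¹ m) = w e m} :=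
        Equiv.subtypeEquivRight fun σ => by simp only [relabel, funext_iff]
    _ ≃ ∀ e, {π : Equiv.Perm (Fin M) // ∀ m, y e (π⁻¹ m) = w e m} :=
        Equiv.subtypePiEquivPi (p := fun e (π : Equiv.Perm (Fin M)) => ∀ m, y e (π⁻¹ m) = w e m)
    _ ≃ ∀ e, {π : Equiv.Perm (Fin M) // ∀ k, y e (π k) = w e k} :=
        Equiv.piCongrRight fun _ => (Equiv.inv _).subtypeEquiv fun _ => Iff.rfl

variable [Fintype E] [DecidableEq E] [∀ e, Fintype (X e)] [∀ e, DecidableEq (X e)]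

lemma sum_perms_eq_sum_card_mul (g : ((e : E) → Fin M → X e) → ℂ) (y : (e : E) → Fin M → X e) :
    ∑ σ : (e : E) → Equiv.Perm (Fin M), g (relabel σ y) =
      ∑ w, (∏ e, (Fintype.card {π : Equiv.Perm (Fin M) // ∀ k, y e (π k) = w e k} : ℂ)) * g w := by
  classical
  rw [← sum_fiberwise' univ (relabel · y) g]
  refine sum_congr rfl fun w _ => ?_
  rw [sum_const, ← Fintype.card_subtype, Fintype.card_congr (relabelFiberEquiv y w),
    Fintype.card_pi, nsmul_eq_mul, Nat.cast_prod]

end Cover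

theorem stmt3_general {F E : Type} [Fintype F] [Fintype E] [DecidableEq F] [DecidableEq E]
    (i j : E → F)
    (X : E → Type) [∀ e, Fintype (X e)] [∀ e, DecidableEq (X e)]
    (f : (v : F) → ((e : {e : E // i e = v ∨ j e = v}) → X e.1) → ℂ)
    (M : ℕ) :
    avgCoverZ i j X f M =
      ∑ u : (e : E) → Fin M → X e, ∑ w : (e : E) → Fin M → X e,
        (∏ m : Fin M, ∏ v : F,
          f v (fun e => if i e.1 = v then u e.1 m else w e.1 m)) *
        ∏ e : E,
          (if ∀ x : X e, occCount (u e) x = occCount (w e) x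
           then ((multinom (u e) : ℂ))⁻¹ else 0) := by
  set G : ((e : E) → Fin M → X e) → ((e : E) → Fin M → X e) → ℂ := fun u w =>
    ∏ m : Fin M, ∏ v : F, f v (fun e => if i e.1 = v then u e.1 m else w e.1 m)
  have hcover (σ : (e : E) → Equiv.Perm (Fin M)) : coverZ i j X f M σ = ∑ u, G u (relabel σ u) :=
    rfl
  have hnorm : ((M.factorial : ℂ) ^ Fintype.card E)⁻¹ = ∏ _e : E, (M.factorial : ℂ)⁻¹ := by
    rw [prod_const, card_univ, inv_pow]
  simp only [avgCoverZ, hcover]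
  rw [sum_comm, mul_sum]
  refine sum_congr rfl fun u _ => ?_
  rw [sum_perms_eq_sum_card_mul (G u), mul_sum]
  refine sum_congr rfl fun w _ => ?_
  rw [← mul_assoc, hnorm, ← prod_mul_distrib, mul_comm]
  simp only [inv_factorial_mul_card_perms_comp_eq, G]

theorem stmt3 {F E : Type} [Fintype F] [Fintype E] [DecidableEq F] [DecidableEq E]
    (i j : E → F) (hij : ∀ e, i e ≠ j e)
    (X : E → Type) [∀ e, Fintype (X e)] [∀ e, DecidableEq (X e)]
    (f : (v : F) → ((e : {e : E // i e = v ∨ j e = v}) → X e.1) → ℂ)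
    (M : ℕ) (hM : 1 ≤ M) :
    avgCoverZ i j X f M =
      ∑ u : (e : E) → Fin M → X e, ∑ w : (e : E) → Fin M → X e,
        (∏ m : Fin M, ∏ v : F,
          f v (fun e => if i e.1 = v then u e.1 m else w e.1 m)) *
        ∏ e : E,
          (if ∀ x : X e, occCount (u e) x = occCount (w e) x
           then ((multinom (u e) : ℂ))⁻¹ else 0) :=
  stmt3_general i j X f M
end

section
/- Let S be a finite type, let F be a finite index set, and for each v ∈ F let f_v : S × S → ℂ be a function that is PSD. Then the partition function Z := Σ_{(x,x') ∈ S × S} ∏_{v ∈ F} f_v(x, x') is a nonnegative real number, i.e., its imaginary part is 0 and its real part is ≥ 0. (This is the statement that the partition function of a strict-sense double-edge normal factor graph, whose configuration space is S and whose local functions all have positive semidefinite Choi matrices, is a nonnegative real number.) -/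
/-!
The matrix of `p ↦ ∏ v, f v p` is the entrywise (Hadamard) product of the PSD matrices of the
`f v`, hence PSD by the Schur product theorem; and `Z` is the quadratic form of that matrix at the
all-ones vector.
-/

open scoped BigOperators ComplexOrder

/-- A function `C : S × S → ℂ` is PSD if the associated complex matrix is
Hermitian positive semidefinite. -/
def IsPSDfun {S : Type} [Fintype S] (C : S × S → ℂ) : Prop :=
  (Matrix.of fun s s' => C (s, s')).PosSemidef

namespace Matrix

variable {𝕜 ι : Type*} [RCLike 𝕜]

theorem posSemidef_allOnes [Fintype ι] : (of fun _ _ => (1 : 𝕜) : Matrix ι ι 𝕜).PosSemidef := by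
  simpa [vecMulVec] using posSemidef_vecMulVec_star_self (1 : ι → 𝕜)

theorem PosSemidef.finsetProd_hadamard [Fintype ι] {F : Type*} (s : Finset F)
    {A : F → Matrix ι ι 𝕜} (hA : ∀ v ∈ s, (A v).PosSemidef) :
    (of fun i j => ∏ v ∈ s, A v i j).PosSemidef := by
  classical
  induction s using Finset.induction_on with
  | empty => simpa using posSemidef_allOnes
  | insert v s hv ih =>
    simp only [Finset.prod_insert hv]
    exact (hA v (s.mem_insert_self v)).hadamard (ih fun w hw => hA w (Finset.mem_insert_of_mem hw))

theorem PosSemidef.sum_entries_nonneg [Fintype ι] {M : Matrix ι ι 𝕜} (hM : M.PosSemidef) :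
    0 ≤ ∑ i, ∑ j, M i j := by
  simpa [dotProduct, mulVec] using hM.dotProduct_mulVec_nonneg 1

end Matrix

theorem stmt8 {S F : Type} [Fintype S] [Fintype F]
    (f : F → S × S → ℂ)
    (hf : ∀ v : F, IsPSDfun (f v)) :
    (∑ p : S × S, ∏ v : F, f v p).im = 0 ∧ 0 ≤ (∑ p : S × S, ∏ v : F, f v p).re := by
  have hprod : (Matrix.of fun x x' => ∏ v, f v (x, x')).PosSemidef :=
    Matrix.PosSemidef.finsetProd_hadamard (A := fun v => Matrix.of fun x x' => f v (x, x'))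
      Finset.univ fun v _ => hf v
  have hZ : 0 ≤ ∑ p : S × S, ∏ v, f v p := by
    simpa [Fintype.sum_prod_type] using hprod.sum_entries_nonneg
  obtain ⟨hre, him⟩ := Complex.nonneg_iff.mp hZ
  exact ⟨him.symm, hre⟩
end

section
/- Let X and Y be finite types, let A : (X × Y) × (X × Y) → ℂ be PSD, and let B : Y × Y → ℂ be PSD. Then the function g : X × X → ℂ defined by g(x, x') := Σ_{(y,y') ∈ Y × Y} A((x, y), (x', y')) · B(y, y') is PSD. (This is the statement that the sum–product-algorithm message update on a double-edge normal factor graph maps positive-semidefinite Choi matrices to positive-semidefinite Choi matrices.) -/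
open scoped BigOperators ComplexOrder

/-!
The matrix of `g` is the Schur product of `A` with `B` pulled back along `X × Y → Y`, with every
`Y × Y` block summed to a scalar. Schur's product theorem keeps the product PSD, and block summation
is a congruence `M ↦ Pᴴ M P`, which preserves PSD.
-/

namespace Matrix

variable {X Y R : Type*} [Fintype X] [Fintype Y]

def blockSum [AddCommMonoid R] (M : Matrix (X × Y) (X × Y) R) : Matrix X X R :=
  of fun x x' => ∑ y, ∑ y', M (x, y) (x', y')

theorem PosSemidef.blockSum [Ring R] [PartialOrder R] [StarRing R]
    {M : Matrix (X × Y) (X × Y) R} (hM : M.PosSemidef) : M.blockSum.PosSemidef := by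
  classical
  convert hM.conjTranspose_mul_mul_same ((1 : Matrix X X R).submatrix Prod.fst id) using 1
  ext x x'
  simp [mul_apply, Fintype.sum_prod_type, one_apply, Finset.sum_comm (γ := X)]
  exact Finset.sum_comm

end Matrix

theorem stmt10 {X Y : Type} [Fintype X] [Fintype Y]
    (A : (X × Y) × (X × Y) → ℂ) (B : Y × Y → ℂ)
    (hA : IsPSDfun A) (hB : IsPSDfun B) :
    IsPSDfun (fun q : X × X => ∑ p : Y × Y, A ((q.1, p.1), (q.2, p.2)) * B p) := by
  have hg : Matrix.of (fun x x' : X => ∑ p : Y × Y, A ((x, p.1), (x', p.2)) * B p) =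
      ((Matrix.of fun p p' => A (p, p')).hadamard
        ((Matrix.of fun y y' => B (y, y')).submatrix Prod.snd Prod.snd)).blockSum := by
    ext x x'
    simp [Matrix.blockSum, Fintype.sum_prod_type]
  rw [IsPSDfun, hg]
  exact (hA.hadamard (hB.submatrix Prod.snd)).blockSum
end

section
/- Let X and Y be finite types, let A : (X × Y) × (X × Y) → ℂ be positive definite, and let B : Y × Y → ℂ be PSD and not identically zero. Then the function g : X × X → ℂ defined by g(x, x') := Σ_{(y,y') ∈ Y × Y} A((x, y), (x', y')) · B(y, y') is positive definite. (This is the statement that if all local functions of a double-edge normal factor graph have positive definite Choi matrices, then the sum–product-algorithm message update produces messages with positive definite Choi matrices.) -/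
/-! Write `B = Cᴴ C`. The quadratic form of `contractSnd M B` at `v` is then the sum over the rows
`c` of `C` of the quadratic forms of `M` at the vectors `(x, y) ↦ v x * c y`. Each term is
nonnegative, and the one for a nonzero row `c` is positive when `v ≠ 0`. -/

open scoped BigOperators ComplexOrder

/-- A function `C : S × S → ℂ` is positive definite if the associated complex matrix is
Hermitian positive definite. -/
def IsPDfun {S : Type} [Fintype S] (C : S × S → ℂ) : Prop :=
  (Matrix.of fun s s' => C (s, s')).PosDef

open Matrix
open scoped MatrixOrder

namespace Matrix

variable {X Y K 𝕜 : Type*} [Fintype Y] [RCLike 𝕜]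

-- The partial trace `Tr_Y (M (1 ⊗ Bᵀ))`, i.e. the sum–product message update.
def contractSnd (M : Matrix (X × Y) (X × Y) 𝕜) (B : Matrix Y Y 𝕜) : Matrix X X 𝕜 :=
  of fun x x' => ∑ p : Y × Y, M (x, p.1) (x', p.2) * B p.1 p.2

lemma isHermitian_contractSnd {M : Matrix (X × Y) (X × Y) 𝕜} {B : Matrix Y Y 𝕜}
    (hM : M.IsHermitian) (hB : B.IsHermitian) : (contractSnd M B).IsHermitian := by
  ext x x'
  simp only [conjTranspose_apply, contractSnd, of_apply, star_sum, star_mul']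
  refine Fintype.sum_equiv (Equiv.prodComm Y Y) _ _ fun p => ?_
  rw [hM.apply, hB.apply]
  rfl

lemma dotProduct_contractSnd_conjTranspose_mul_self_mulVec [Fintype X] [Fintype K]
    (M : Matrix (X × Y) (X × Y) 𝕜) (C : Matrix K Y 𝕜) (v : X → 𝕜) :
    star v ⬝ᵥ (contractSnd M (Cᴴ * C) *ᵥ v) =
      ∑ k, star (fun p : X × Y => v p.1 * C k p.2) ⬝ᵥ (M *ᵥ fun p => v p.1 * C k p.2) := by
  simp only [dotProduct, mulVec, contractSnd, of_apply, mul_apply, conjTranspose_apply,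
    Fintype.sum_prod_type, Finset.mul_sum, Finset.sum_mul, Pi.star_apply, star_mul']
  -- reorder the sums from `x, x', y, y', k` to `k, x, y, x', y'`
  rw [Finset.sum_comm (s := (Finset.univ : Finset K))]
  refine Finset.sum_congr rfl fun x _ => ?_
  rw [Finset.sum_comm (s := (Finset.univ : Finset K)),
    Finset.sum_comm (s := (Finset.univ : Finset X))]
  refine Finset.sum_congr rfl fun y _ => ?_
  rw [Finset.sum_comm (s := (Finset.univ : Finset K))]
  refine Finset.sum_congr rfl fun x' _ => ?_
  rw [Finset.sum_comm (s := (Finset.univ : Finset K))]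
  refine Finset.sum_congr rfl fun y' _ => Finset.sum_congr rfl fun k _ => ?_
  ring

lemma PosDef.contractSnd [Fintype X] {M : Matrix (X × Y) (X × Y) 𝕜} {B : Matrix Y Y 𝕜}
    (hM : M.PosDef) (hB : B.PosSemidef) (hB0 : B ≠ 0) : (contractSnd M B).PosDef := by
  classical
  obtain ⟨C, rfl⟩ := CStarAlgebra.nonneg_iff_eq_star_mul_self.mp hB.nonneg
  obtain ⟨k, y, hC⟩ : ∃ k y, C k y ≠ 0 := by
    by_contra! h
    exact hB0 (by simp [show C = 0 from ext h])
  refine .of_dotProduct_mulVec_pos (isHermitian_contractSnd hM.isHermitian hB.isHermitian)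
    fun v hv => ?_
  obtain ⟨x, hx⟩ := Function.ne_iff.mp hv
  rw [star_eq_conjTranspose, dotProduct_contractSnd_conjTranspose_mul_self_mulVec]
  refine Finset.sum_pos' (fun j _ => hM.posSemidef.dotProduct_mulVec_nonneg _)
    ⟨k, Finset.mem_univ _, hM.dotProduct_mulVec_pos ?_⟩
  exact Function.ne_iff.mpr ⟨(x, y), mul_ne_zero hx hC⟩

end Matrix

theorem stmt12 {X Y : Type} [Fintype X] [Fintype Y]
    (A : (X × Y) × (X × Y) → ℂ) (B : Y × Y → ℂ)
    (hA : IsPDfun A) (hB : IsPSDfun B) (hB0 : B ≠ 0) :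
    IsPDfun (fun q : X × X => ∑ p : Y × Y, A ((q.1, p.1), (q.2, p.2)) * B p) :=
  PosDef.contractSnd (M := of fun p q => A (p, q)) (B := of fun y y' => B (y, y')) hA hB
    fun h => hB0 (funext fun p => congrFun₂ h p.1 p.2)
end

section
/- Let X be a finite set with a distinguished element 0 and let μ_i, μ_j : X → ℝ be functions with Z := Σ_{x ∈ X} μ_i(x) μ_j(x) > 0. Let b := Z^{-1} μ_i(0) μ_j(0), and let ζ_i, ζ_j, χ_i, χ_j, δ_i, δ_j, ε_i, ε_j be real numbers satisfying: ζ_i ζ_j = Z^{-1}; χ_i χ_j = 1; δ_i δ_j = Z; δ_i + Z(1 − b) ε_i = μ_j(0); δ_j + Z(1 − b) ε_j = μ_i(0); and, in case b = 1, additionally 1 + δ_i ε_j + δ_j ε_i = 0. Define M_i : X × X → ℝ by: M_i(x, x̂) := ζ_i μ_i(x) if x̂ = 0; M_i(x, x̂) := −ζ_i χ_i μ_j(x̂) if x = 0 and x̂ ≠ 0; and M_i(x, x̂) := ζ_i χ_i ( δ_i [x = x̂] + ε_i μ_i(x) μ_j(x̂) ) if x ≠ 0 and x̂ ≠ 0;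 and define M_j : X × X → ℝ by the same formulas with the roles of the subscripts i and j interchanged. Then for all x, x' ∈ X: Σ_{x̂ ∈ X} M_i(x, x̂) · M_j(x', x̂) = 1 if x = x', and = 0 otherwise. -/
/-!
The column `x̂ = 0` contributes `ζᵢζⱼ μᵢ(x) μⱼ(x') = Z⁻¹ μᵢ(x) μⱼ(x')`. On every other column both
matrices are a diagonal term plus a multiple of `μⱼ` (resp. `μᵢ`), the row `0` included with
coefficient `-1`, so with `ζᵢχᵢζⱼχⱼ = Z⁻¹` the rest of the sum is explicit in terms of
`W = ∑_{x̂ ≠ 0} μᵢ(x̂) μⱼ(x̂) = Z (1 - b)`. The four cases `x = 0` or not, `x' = 0` or not, then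
reduce to `δᵢ + W εᵢ = μⱼ(0)`, `δⱼ + W εⱼ = μᵢ(0)`, `δᵢδⱼ = Z` and
`1 + δᵢεⱼ + δⱼεᵢ + εᵢεⱼ W = 0`. Multiplied by `W`, the last identity is a consequence of the
other three; when `W = 0`, i.e. `b = 1`, it is the extra hypothesis.
-/

open Finset

theorem sum_diag_add_rankOne_mul_diag_add_rankOne {ι R : Type*} [CommRing R] [DecidableEq ι]
    (s : Finset ι) (f g : ι → R) (d d' a a' : R) (i j : ι) :
    ∑ k ∈ s, (d * (if i = k then 1 else 0) + a * f k) * (d' * (if j = k then 1 else 0) + a' * g k)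
      = (if i = j ∧ i ∈ s then d * d' else 0) + (if i ∈ s then d * a' * g i else 0)
        + (if j ∈ s then d' * a * f j else 0) + a * a' * ∑ k ∈ s, f k * g k := by
  have expand : ∀ k, (d * (if i = k then 1 else 0) + a * f k) *
      (d' * (if j = k then 1 else 0) + a' * g k)
      = (if i = k then (if j = k then d * d' else 0) else 0) + (if i = k then d * a' * g k else 0)
        + (if j = k then d' * a * f k else 0) + a * a' * (f k * g k) := by
    intro k
    split_ifs <;> ring
  simp only [expand, sum_add_distrib, ← mul_sum, sum_ite_eq]
  by_cases hij : i = j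
  · subst hij
    simp
  · simp [hij, Ne.symm hij]

theorem one_add_mul_add_mul_add_mul_mul_eq_zero {R : Type*} [CommRing R] [NoZeroDivisors R]
    {Z W p q δ δ' ε ε' : R} (hW : W = Z - p * q)
    (hδ : δ * δ' = Z) (h : δ + W * ε = q) (h' : δ' + W * ε' = p)
    (hdeg : W = 0 → 1 + δ * ε' + δ' * ε = 0) : 1 + δ * ε' + δ' * ε + ε * ε' * W = 0 := by
  rcases eq_or_ne W 0 with hW0 | hW0
  · simp [hW0, hdeg hW0]
  · refine (mul_eq_zero.mp ?_).resolve_left hW0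
    linear_combination δ' * h + δ * h' + (p - δ') * h + W * ε * h' + hW - hδ

section LoopEdgeMatrix

variable {X R : Type*} [DecidableEq X] [CommRing R] (x0 : X)

/-- The paper's `M_i` is `loopEdgeMatrix x0 μi μj ζi χi δi εi`, and `M_j` swaps `i` and `j`. -/
def loopEdgeMatrix (μ ν : X → R) (ζ χ δ ε : R) (x xh : X) : R :=
  if xh = x0 then ζ * μ x
  else if x = x0 then -(ζ * χ * ν xh)
  else ζ * χ * (δ * (if x = xh then 1 else 0) + ε * μ x * ν xh)

def loopEdgeCoeff (μ : X → R) (ε : R) (x : X) : R :=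
  if x = x0 then -1 else ε * μ x

theorem loopEdgeMatrix_apply_self (μ ν : X → R) (ζ χ δ ε : R) (x : X) :
    loopEdgeMatrix x0 μ ν ζ χ δ ε x x0 = ζ * μ x :=
  if_pos rfl

theorem loopEdgeMatrix_apply_of_ne (μ ν : X → R) (ζ χ δ ε : R) (x : X) {xh : X}
    (hxh : xh ≠ x0) :
    loopEdgeMatrix x0 μ ν ζ χ δ ε x xh
      = ζ * χ * (δ * (if x = xh then 1 else 0) + loopEdgeCoeff x0 μ ε x * ν xh) := by
  rcases eq_or_ne x x0 with rfl | hx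
  · simp [loopEdgeMatrix, loopEdgeCoeff, hxh, Ne.symm hxh]
  · simp [loopEdgeMatrix, loopEdgeCoeff, hxh, hx]

theorem sum_loopEdgeMatrix_mul_loopEdgeMatrix [Fintype X] (μ ν : X → R)
    (ζ χ δ ε ζ' χ' δ' ε' : R) (x x' : X) :
    ∑ xh, loopEdgeMatrix x0 μ ν ζ χ δ ε x xh * loopEdgeMatrix x0 ν μ ζ' χ' δ' ε' x' xh
      = ζ * μ x * (ζ' * ν x') + ζ * χ * (ζ' * χ') *
        ((if x = x' ∧ x ≠ x0 then δ * δ' else 0)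
          + (if x ≠ x0 then δ * loopEdgeCoeff x0 ν ε' x' * μ x else 0)
          + (if x' ≠ x0 then δ' * loopEdgeCoeff x0 μ ε x * ν x' else 0)
          + loopEdgeCoeff x0 μ ε x * loopEdgeCoeff x0 ν ε' x' *
            ∑ xh ∈ univ.erase x0, ν xh * μ xh) := by
  rw [← add_sum_erase _ _ (mem_univ x0), loopEdgeMatrix_apply_self, loopEdgeMatrix_apply_self,
    sum_congr rfl fun xh hxh => by
      rw [loopEdgeMatrix_apply_of_ne _ _ _ _ _ _ _ _ (ne_of_mem_erase hxh),
        loopEdgeMatrix_apply_of_ne _ _ _ _ _ _ _ _ (ne_of_mem_erase hxh), mul_mul_mul_comm],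
    ← mul_sum, sum_diag_add_rankOne_mul_diag_add_rankOne]
  simp only [mem_erase, mem_univ, and_true]

end LoopEdgeMatrix

theorem stmt15 {X : Type} [Fintype X] [DecidableEq X] (x0 : X)
    (μi μj : X → ℝ) (Z : ℝ)
    (hZdef : Z = ∑ x : X, μi x * μj x) (hZ : 0 < Z)
    (b : ℝ) (hb : b = Z⁻¹ * (μi x0 * μj x0))
    (ζi ζj χi χj δi δj εi εj : ℝ)
    (h1 : ζi * ζj = Z⁻¹) (h2 : χi * χj = 1) (h3 : δi * δj = Z)
    (h4 : δi + Z * (1 - b) * εi = μj x0)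
    (h5 : δj + Z * (1 - b) * εj = μi x0)
    (h6 : b = 1 → 1 + δi * εj + δj * εi = 0)
    (Mi Mj : X → X → ℝ)
    (hMi : ∀ x xh : X, Mi x xh =
      if xh = x0 then ζi * μi x
      else if x = x0 then -(ζi * χi * μj xh)
      else ζi * χi * (δi * (if x = xh then 1 else 0) + εi * μi x * μj xh))
    (hMj : ∀ x xh : X, Mj x xh =
      if xh = x0 then ζj * μj x
      else if x = x0 then -(ζj * χj * μi xh)
      else ζj * χj * (δj * (if x = xh then 1 else 0) + εj * μj x * μi xh)) :
    ∀ x x' : X, (∑ xh : X, Mi x xh * Mj x' xh) = if x = x' then 1 else 0 := by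
  obtain rfl : Mi = loopEdgeMatrix x0 μi μj ζi χi δi εi := funext₂ hMi
  obtain rfl : Mj = loopEdgeMatrix x0 μj μi ζj χj δj εj := funext₂ hMj
  intro x x'
  have hZ0 : Z ≠ 0 := hZ.ne'
  have hW : Z * (1 - b) = Z - μi x0 * μj x0 := by
    rw [hb]
    field_simp
  have hW_sum : ∑ xh ∈ univ.erase x0, μj xh * μi xh = Z * (1 - b) := by
    simp only [mul_comm (μj _), sum_erase_eq_sub (mem_univ x0), ← hZdef, hW]
  have hK := one_add_mul_add_mul_add_mul_mul_eq_zero hW h3 h4 h5 fun h ↦ h6 <| by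
    linarith [(mul_eq_zero.mp h).resolve_left hZ0]
  have hc : ζi * χi * (ζj * χj) = Z⁻¹ := by linear_combination χi * χj * h1 + Z⁻¹ * h2
  have hc' : ζi * μi x * (ζj * μj x') = Z⁻¹ * (μi x * μj x') := by
    linear_combination μi x * μj x' * h1
  rw [sum_loopEdgeMatrix_mul_loopEdgeMatrix, hW_sum, hc, hc', ← mul_add,
    inv_mul_eq_iff_eq_mul₀ hZ0]
  by_cases hx : x = x0 <;> by_cases hx' : x' = x0
  · simp only [loopEdgeCoeff, hx, hx', ne_eq, not_true_eq_false, and_false, if_true, if_false]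
    linear_combination hW
  · simp only [loopEdgeCoeff, hx, hx', Ne.symm hx', ne_eq, not_true_eq_false, not_false_eq_true,
      and_false, if_true, if_false]
    linear_combination -(μj x') * h5
  · simp only [loopEdgeCoeff, hx, hx', ne_eq, not_true_eq_false, not_false_eq_true, and_true,
      if_true, if_false]
    linear_combination -(μi x) * h4
  · by_cases hxx' : x = x'
    · subst hxx'
      simp only [loopEdgeCoeff, hx, ne_eq, not_false_eq_true, and_self, if_true, if_false]
      linear_combination h3 + μi x * μj x * hK
    · simp only [loopEdgeCoeff, hx, hx', hxx', ne_eq, not_false_eq_true, and_true,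
        if_true, if_false]
      linear_combination μi x * μj x' * hK
end

section
/- Let E be a finite set and, for each e ∈ E, let X_e and X̂_e be finite sets and let A_e, B_e : X_e × X̂_e → ℂ be functions satisfying Σ_{x̂ ∈ X̂_e} A_e(x, x̂) · B_e(x', x̂) = [x = x'] for all x, x' ∈ X_e, where [x = x'] denotes the Iverson bracket. Then for every function G : (∏_{e ∈ E} X_e) × (∏_{e ∈ E} X_e) → ℂ one has Σ_{x ∈ ∏_e X_e} G(x, x) = Σ_{x̂ ∈ ∏_e X̂_e} Σ_{(u, w) ∈ (∏_e X_e) × (∏_e X_e)} G(u, w) · ∏_{e ∈ E} A_e(u_e, x̂_e) · B_e(w_e, x̂_e). (This is the statement that the loop-calculus/holographic transform leaves the partition function of a normal factor graph unchanged.) -/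
/-!
The transform is a resolution of the identity: summing the product of the `A e ⊗ B e` over all
dual configurations `xh` factorizes into the product over `e` of the local sums, which is the
Kronecker delta `[u = w]`. Exchanging the order of summation therefore collapses the double sum
over `(u, w)` to its diagonal.
-/

open scoped BigOperators

section

variable {ι R : Type*} [Fintype ι] [DecidableEq ι] [CommSemiring R]
  {X Y : ι → Type*} [∀ i, Fintype (Y i)] [∀ i, DecidableEq (X i)]

theorem Fintype.sum_prod_mul_eq_ite_of_sum_mul_eq_ite (A B : ∀ i, X i → Y i → R)
    (hAB : ∀ i x x', ∑ y, A i x y * B i x' y = if x = x' then 1 else 0) (u w : ∀ i, X i) :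
    ∑ y : ∀ i, Y i, ∏ i, A i (u i) (y i) * B i (w i) (y i) = if u = w then 1 else 0 := by
  rw [← Fintype.prod_sum fun i y ↦ A i (u i) y * B i (w i) y]
  simp only [hAB, Fintype.prod_boole, funext_iff]

theorem Fintype.sum_diag_eq_sum_sum_mul_prod_of_sum_mul_eq_ite [∀ i, Fintype (X i)]
    (A B : ∀ i, X i → Y i → R)
    (hAB : ∀ i x x', ∑ y, A i x y * B i x' y = if x = x' then 1 else 0)
    (G : (∀ i, X i) × (∀ i, X i) → R) :
    ∑ x : ∀ i, X i, G (x, x) =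
      ∑ y : ∀ i, Y i, ∑ p : (∀ i, X i) × (∀ i, X i),
        G p * ∏ i, A i (p.1 i) (y i) * B i (p.2 i) (y i) := by
  rw [Finset.sum_comm]
  simp only [← Finset.mul_sum, Fintype.sum_prod_mul_eq_ite_of_sum_mul_eq_ite A B hAB,
    Fintype.sum_prod_type, mul_ite, mul_one, mul_zero, Finset.sum_ite_eq, Finset.mem_univ,
    if_true]

end

theorem stmt16 {E : Type} [Fintype E] [DecidableEq E]
    (X Xh : E → Type) [∀ e, Fintype (X e)] [∀ e, Fintype (Xh e)] [∀ e, DecidableEq (X e)]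
    (A B : (e : E) → X e → Xh e → ℂ)
    (hAB : ∀ (e : E) (x x' : X e),
      (∑ xh : Xh e, A e x xh * B e x' xh) = if x = x' then 1 else 0)
    (G : ((e : E) → X e) × ((e : E) → X e) → ℂ) :
    (∑ x : (e : E) → X e, G (x, x)) =
      ∑ xh : (e : E) → Xh e, ∑ p : ((e : E) → X e) × ((e : E) → X e),
        G p * ∏ e : E, (A e (p.1 e) (xh e) * B e (p.2 e) (xh e)) :=
  Fintype.sum_diag_eq_sum_sum_mul_prod_of_sum_mul_eq_ite A B hAB G
end

section
/- Let P be a finite set and, for each e ∈ P, let X_e be a finite set with a distinguished element 0_e. Let f : (∏_{e ∈ P} X_e) → ℝ and fix e₀ ∈ P. Suppose: (a) for each e ∈ P with e ≠ e₀ there are a function μ_e : X_e → ℝ, a real number ζ_e, and a function M_e : X_e × X_e → ℝ with M_e(x, 0_e) = ζ_e μ_e(x) for all x ∈ X_e; (b) there are a function ν : X_{e₀} → ℝ and a real number κ such that, for every z ∈ X_{e₀}, the sum over all x ∈ ∏_{e ∈ P} X_e with x_{e₀} = z of f(x) · ∏_{e ∈ P, e ≠ e₀} μ_e(x_e) equals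 κ · ν(z); (c) there are functions M_{e₀}, N : X_{e₀} × X_{e₀} → ℝ and a real number ξ ≠ 0 with N(x, 0_{e₀}) = ξ · ν(x) for all x ∈ X_{e₀} and Σ_{x ∈ X_{e₀}} M_{e₀}(x, x̂) · N(x, x̂') = [x̂ = x̂'] for all x̂, x̂' ∈ X_{e₀}. Then for every x̂ ∈ ∏_{e ∈ P} X_e with x̂_{e₀} ≠ 0_{e₀} and x̂_e = 0_e for all e ≠ e₀, the transformed local function value f̃(x̂) := Σ_{x ∈ ∏_{e ∈ P} X_e} f(x) · ∏_{e ∈ P} M_e(x_e, x̂_e) equals 0. -/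
/-!
Every edge other than `e₀` sits at its distinguished value, where column `0` of `M_e` is
`ζ_e μ_e`. Pulling out the constants `ζ_e`, the sum defining `f̃(x̂)` becomes the
`M_{e₀}(·, x̂_{e₀})`-weighted sum of the sum–product fixed-point equation, i.e. a multiple of
`∑_z M_{e₀}(z, x̂_{e₀}) ν(z)`. Since `ν` is proportional to column `0` of `N`, biorthogonality
makes this vanish as soon as `x̂_{e₀} ≠ 0_{e₀}`.
-/

open Finset

theorem Fintype.prod_eq_prod_erase_mul_mul_prod_erase {ι R : Type*} [Fintype ι]
    [DecidableEq ι] [CommMonoid R] {F : ι → R} (i₀ : ι) (c g : ι → R)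
    (hF : ∀ i, i ≠ i₀ → F i = c i * g i) :
    ∏ i, F i = (∏ i ∈ univ.erase i₀, c i) * (F i₀ * ∏ i ∈ univ.erase i₀, g i) := by
  rw [← mul_prod_erase univ F (mem_univ i₀),
    Finset.prod_congr rfl fun i hi => hF i (ne_of_mem_erase hi), prod_mul_distrib]
  ac_rfl

theorem Fintype.sum_mul_comp_eq_sum_mul_sum_ite {α β R : Type*} [Fintype α] [Fintype β]
    [DecidableEq β] [NonUnitalNonAssocSemiring R] (π : α → β) (h : β → R) (g : α → R) :
    ∑ a, h (π a) * g a = ∑ b, h b * ∑ a, if π a = b then g a else 0 := by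
  simp_rw [mul_sum, mul_ite, mul_zero]
  rw [sum_comm]
  simp only [Fintype.sum_ite_eq]

theorem stmt17 {P : Type} [Fintype P] [DecidableEq P]
    (X : P → Type) [∀ e, Fintype (X e)] [∀ e, DecidableEq (X e)]
    (x0 : (e : P) → X e)
    (f : ((e : P) → X e) → ℝ) (e0 : P)
    (μ : (e : P) → X e → ℝ) (ζ : P → ℝ)
    (M : (e : P) → X e → X e → ℝ)
    (ha : ∀ e : P, e ≠ e0 → ∀ x : X e, M e x (x0 e) = ζ e * μ e x)
    (ν : X e0 → ℝ) (κ : ℝ)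
    (hb : ∀ z : X e0,
      (∑ x : (e : P) → X e,
        if x e0 = z then f x * ∏ e ∈ Finset.univ.erase e0, μ e (x e) else 0) = κ * ν z)
    (N : X e0 → X e0 → ℝ) (ξ : ℝ) (hξ : ξ ≠ 0)
    (hN0 : ∀ x : X e0, N x (x0 e0) = ξ * ν x)
    (hbi : ∀ xh xh' : X e0,
      (∑ x : X e0, M e0 x xh * N x xh') = if xh = xh' then 1 else 0)
    (xh : (e : P) → X e) (hxh0 : xh e0 ≠ x0 e0) (hxh : ∀ e : P, e ≠ e0 → xh e = x0 e) :
    (∑ x : (e : P) → X e, f x * ∏ e : P, M e (x e) (xh e)) = 0 := by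
  set C := ∏ e ∈ univ.erase e0, ζ e
  calc ∑ x, f x * ∏ e, M e (x e) (xh e)
      = C * ∑ x, M e0 (x e0) (xh e0) * (f x * ∏ e ∈ univ.erase e0, μ e (x e)) := by
        rw [mul_sum]
        refine sum_congr rfl fun x _ => ?_
        rw [Fintype.prod_eq_prod_erase_mul_mul_prod_erase e0 ζ (fun e => μ e (x e))
          fun e he => by rw [hxh e he, ha e he]]
        ring
    _ = C * ∑ z, M e0 z (xh e0) * (κ * ν z) := by
        congr 1
        exact (Fintype.sum_mul_comp_eq_sum_mul_sum_ite (fun x : (e : P) → X e => x e0)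
          (M e0 · (xh e0)) _).trans (by simp_rw [hb])
    _ = C * κ * ξ⁻¹ * ∑ z, M e0 z (xh e0) * N z (x0 e0) := by
        simp_rw [hN0, mul_sum]
        refine sum_congr rfl fun z _ => ?_
        field_simp
    _ = 0 := by rw [hbi, if_neg hxh0, mul_zero]
end
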